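/- arXiv:1005.5472 — 7 statements merged into one kernel-verified Lean document; each statement's English description precedes it below -/
import Mathlib

section
/- Let Γ ∈ ℝ^{n×m} be a matrix each of whose rows has at most two nonzero entries, and suppose the SR graph of Γ contains no o-cycle. Then Γ is R-sortable: there exists d ∈ {−1,+1}^m such that for every row index k and all distinct column indices i, j one has d_i d_j Γ_{ki} Γ_{kj} ≤ 0. -/
structure SRGraph where
  S : Type
  R : Type
  E : Type
  endS : E → S
  endR : E → R
  sgn : E → ℤ
  sgn_eq : ∀ e, sgn e = 1 ∨ sgn e = -1
  lbl : E → ℝ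
  lbl_pos : ∀ e, 0 < lbl e

namespace SRGraph

variable (G : SRGraph)

/-- Vertices of an SR graph: S-vertices and R-vertices. -/
def Vert := G.S ⊕ G.R

/-- An edge `e` is incident to a vertex `x`. -/
def inc (e : G.E) (x : G.Vert) : Prop :=
  x = Sum.inl (G.endS e) ∨ x = Sum.inr (G.endR e)

/-- A (non-self-intersecting) path of length `k` in an SR graph: an alternating
sequence of vertices and edges; vertices are pairwise distinct except that the
initial and terminal vertex may coincide (in which case the path is closed). -/
structure Path (k : ℕ) where
  vert : Fin (k+1) → G.Vert
  edge : Fin k → G.E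
  edge_src : ∀ i : Fin k, G.inc (edge i) (vert i.castSucc)
  edge_tgt : ∀ i : Fin k, G.inc (edge i) (vert i.succ)
  edge_inj : Function.Injective edge
  vert_nodup : ∀ i j : Fin (k+1), vert i = vert j →
    i = j ∨ (i = 0 ∧ j = Fin.last k) ∨ (i = Fin.last k ∧ j = 0)

variable {G}

/-- The sign of a path: the product of the signs of its edges. -/
def Path.sign {k : ℕ} (p : G.Path k) : ℤ := ∏ i, G.sgn (p.edge i)

/-- The parity of a path of even length `k`: `(-1)^(k/2)` times its sign. -/
def Path.parity {k : ℕ} (p : G.Path k) : ℤ := (-1) ^ (k / 2) * p.sign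

def Path.IsClosed {k : ℕ} (p : G.Path k) : Prop := p.vert (Fin.last k) = p.vert 0

/-- A cycle: a closed path of positive length. -/
def Path.IsCycle {k : ℕ} (p : G.Path k) : Prop := 0 < k ∧ p.IsClosed

/-- The graph contains an o-cycle, i.e. a cycle of parity `-1`. -/
def HasOCycle (G : SRGraph) : Prop :=
  ∃ (k : ℕ) (p : G.Path k), p.IsCycle ∧ p.parity = -1

/-- The S-degree of `G` is at most 2: no S-vertex has three distinct incident edges. -/
def SDegreeLE2 (G : SRGraph) : Prop :=
  ∀ s : G.S, ∀ e₁ e₂ e₃ : G.E,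
    G.endS e₁ = s → G.endS e₂ = s → G.endS e₃ = s → e₁ = e₂ ∨ e₁ = e₃ ∨ e₂ = e₃

/-- The R-degree of `G` is at most 2: no R-vertex has three distinct incident edges. -/
def RDegreeLE2 (G : SRGraph) : Prop :=
  ∀ r : G.R, ∀ e₁ e₂ e₃ : G.E,
    G.endR e₁ = r → G.endR e₂ = r → G.endR e₃ = r → e₁ = e₂ ∨ e₁ = e₃ ∨ e₂ = e₃

/-- `G` is connected: any two vertices are joined by a path. -/
def Connected (G : SRGraph) : Prop :=
  ∀ x y : G.Vert, ∃ (k : ℕ) (p : G.Path k), p.vert 0 = x ∧ p.vert (Fin.last k) = y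

end SRGraph

/-- The SR graph of a real matrix `Γ`: S-vertices are rows, R-vertices are columns,
with an edge `{S i, R j}` whenever `Γ i j ≠ 0`, signed by the sign of `Γ i j` and
labelled `|Γ i j|`. -/
noncomputable def SRofMatrix {n m : ℕ} (Γ : Matrix (Fin n) (Fin m) ℝ) : SRGraph where
  S := Fin n
  R := Fin m
  E := {p : Fin n × Fin m // Γ p.1 p.2 ≠ 0}
  endS := fun e => e.1.1
  endR := fun e => e.1.2
  sgn := fun e => if 0 < Γ e.1.1 e.1.2 then 1 else -1
  sgn_eq := fun e => by (try dsimp only); split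
                        · exact Or.inl rfl
                        · exact Or.inr rfl
  lbl := fun e => |Γ e.1.1 e.1.2|
  lbl_pos := fun e => abs_pos.mpr e.2

open SRGraph

/-!
Regard the SR graph of `Γ` as a simple graph on rows ⊕ columns and twist the sign of each edge
`{S k, R j}` by `-1` when `j` is the first nonzero column of row `k`. Every S-vertex on a cycle has
exactly two cycle edges, namely the two nonzero entries of its row, and exactly one of them is
twisted; so the twisted sign of a cycle is its parity, and without o-cycles every cycle is
positive. Harary's balance theorem then gives vertex signs `φ` with `φ x * φ y` equal to the
twisted sign of each edge `{x, y}`, and `d := φ` on the columns sorts `Γ`: the two entries of a row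
carry opposite twists.
-/

namespace SimpleGraph

variable {V : Type*} {G : SimpleGraph V} {σ : Sym2 V → ℤˣ} {φ : V → ℤˣ} {u v : V}

def IsPotential (G : SimpleGraph V) (σ : Sym2 V → ℤˣ) (φ : V → ℤˣ) : Prop :=
  ∀ ⦃u v⦄, G.Adj u v → φ u * φ v = σ s(u, v)

lemma IsPotential.prod_edges (hφ : IsPotential G σ φ) {u v : V} (p : G.Walk u v) :
    (p.edges.map σ).prod = φ u * φ v := by
  induction p with
  | nil => exact (Int.units_mul_self _).symm
  | @cons u v w huv p ih =>
    rw [Walk.edges_cons, List.map_cons, List.prod_cons, ih, ← hφ huv, mul_assoc,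
      ← mul_assoc (φ v), Int.units_mul_self, one_mul]

lemma IsPotential.exists_isPotential_sup_edge (hφ : IsPotential G σ φ)
    (hreach : G.Reachable u v → φ u * φ v = σ s(u, v)) :
    ∃ ψ, IsPotential (G ⊔ edge u v) σ ψ := by
  by_cases hkeep : φ u * φ v = σ s(u, v)
  · refine ⟨φ, fun a b hab => ?_⟩
    rw [sup_adj, edge_adj] at hab
    rcases hab with hab | ⟨⟨rfl, rfl⟩ | ⟨rfl, rfl⟩, -⟩
    · exact hφ hab
    · exact hkeep
    · rw [mul_comm, Sym2.eq_swap]; exact hkeep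
  · classical
    have hvu : ¬ G.Reachable v u := fun hr => hkeep (hreach hr.symm)
    have hflip : -(φ u * φ v) = σ s(u, v) := by
      rcases Int.units_eq_one_or (φ u * φ v) with h | h <;>
        rcases Int.units_eq_one_or (σ s(u, v)) with h' | h' <;> simp_all
    -- switching `φ` on the component of `v` repairs the new edge and keeps all old ones
    refine ⟨fun a => if G.Reachable v a then -φ a else φ a, fun a b hab => ?_⟩
    rw [sup_adj, edge_adj] at hab
    rcases hab with hab | ⟨⟨rfl, rfl⟩ | ⟨rfl, rfl⟩, -⟩
    · have hab' : G.Reachable v a ↔ G.Reachable v b :=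
        ⟨fun h => h.trans hab.reachable, fun h => h.trans hab.symm.reachable⟩
      by_cases ha : G.Reachable v a
      · simp only [ha, hab'.1 ha, if_true, neg_mul_neg]; exact hφ hab
      · simp only [ha, mt hab'.2 ha, if_false]; exact hφ hab
    · simp only [hvu, Reachable.refl, if_true, if_false, mul_neg]; exact hflip
    · simp only [hvu, Reachable.refl, if_true, if_false, neg_mul]
      rw [mul_comm, Sym2.eq_swap]; exact hflip

/-- Harary's balance theorem: if every cycle is positive, the signing `σ` is switching equivalent to
the all-positive one. -/
theorem exists_isPotential_of_forall_isCycle (hfin : G.edgeSet.Finite)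
    (hσ : ∀ u (c : G.Walk u u), c.IsCycle → (c.edges.map σ).prod = 1) :
    ∃ φ, IsPotential G σ φ := by
  suffices ∃ φ, IsPotential (fromEdgeSet G.edgeSet) σ φ by rwa [fromEdgeSet_edgeSet] at this
  refine Set.Finite.induction_on_subset (motive := fun t _ => ∃ φ, IsPotential (fromEdgeSet t) σ φ)
    _ hfin ⟨1, fun a b hab => by simp at hab⟩ ?_
  intro e t he hts het ⟨φ, hφ⟩
  induction e using Sym2.ind with
  | _ u v =>
  rw [Set.insert_eq, fromEdgeSet_union, sup_comm]
  refine hφ.exists_isPotential_sup_edge fun hr => ?_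
  obtain ⟨p, hp⟩ := hr.symm.exists_isPath
  have hle : fromEdgeSet t ≤ G := fun a b hab =>
    G.mem_edgeSet.1 (hts ((fromEdgeSet_adj t).1 hab).1)
  have hc : (Walk.cons (G.mem_edgeSet.1 he) (p.mapLe hle)).IsCycle := by
    refine (Walk.cons_isCycle_iff _ _).2 ⟨hp.mapLe hle, fun hmem => het ?_⟩
    rw [Walk.edges_mapLe_eq_edges] at hmem
    exact ((edgeSet_fromEdgeSet t ▸ p.edges_subset_edgeSet hmem) : _).1
  have hprod := hσ u _ hc
  rw [Walk.edges_cons, List.map_cons, List.prod_cons, Walk.edges_mapLe_eq_edges,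
    hφ.prod_edges p, mul_comm (φ v)] at hprod
  rw [← Int.units_inv_eq_self (σ _)]
  exact eq_inv_of_mul_eq_one_right hprod

end SimpleGraph

theorem Finset.prod_range_two_mul {M : Type*} [CommMonoid M] (f : ℕ → M) (N : ℕ) :
    ∏ i ∈ Finset.range (2 * N), f i = ∏ t ∈ Finset.range N, f (2 * t) * f (2 * t + 1) := by
  induction N with
  | zero => simp
  | succ N ih =>
    rw [Nat.mul_succ, Finset.prod_range_succ, Finset.prod_range_succ, ih,
      Finset.prod_range_succ, mul_assoc]

namespace SimpleGraph.Walk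

variable {V : Type*} {G : SimpleGraph V}

theorem prod_map_edges_eq_prod_range {M : Type*} [CommMonoid M] (F : Sym2 V → M) {u v : V}
    (p : G.Walk u v) :
    (p.edges.map F).prod = ∏ i ∈ Finset.range p.length, F s(p.getVert i, p.getVert (i + 1)) := by
  induction p with
  | nil => simp
  | cons h p ih =>
    rw [edges_cons, List.map_cons, List.prod_cons, ih, length_cons, Finset.prod_range_succ',
      mul_comm]
    simp only [getVert_cons_succ, getVert_zero]

end SimpleGraph.Walk

open SimpleGraph

def AtMostTwoNonzero {ι R : Type*} [Zero R] (v : ι → R) : Prop :=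
  ∀ i j l, v i ≠ 0 → v j ≠ 0 → v l ≠ 0 → i = j ∨ i = l ∨ j = l

section SRMatrix

variable {n m : ℕ} (Γ : Matrix (Fin n) (Fin m) ℝ)

def srGraph : SimpleGraph (Fin n ⊕ Fin m) where
  Adj
    | .inl k, .inr j => Γ k j ≠ 0
    | .inr j, .inl k => Γ k j ≠ 0
    | _, _ => False
  symm := ⟨by rintro (k | j) (k' | j') h <;> exact h⟩
  loopless := ⟨by rintro (k | j) h <;> exact h⟩

def srColoring : (srGraph Γ).Coloring Bool :=
  Coloring.mk Sum.isLeft <| by rintro (k | j) (k' | j') h <;> first | exact h.elim | simp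

def bipartiteLift (f : Fin n → Fin m → ℤˣ) : Sym2 (Fin n ⊕ Fin m) → ℤˣ :=
  Sym2.lift ⟨fun x y => match x, y with
    | .inl k, .inr j => f k j
    | .inr j, .inl k => f k j
    | _, _ => 1, by rintro (k | j) (k' | j') <;> rfl⟩

noncomputable def unitSign (a : ℝ) : ℤˣ := if 0 < a then 1 else -1

lemma unitSign_mul_self (a : ℝ) : ((unitSign a : ℤ) : ℝ) * a = |a| := by
  unfold unitSign
  split_ifs with h
  · simp [abs_of_pos h]
  · simp [abs_of_nonpos (not_lt.1 h)]

noncomputable def leadSign (k : Fin n) (j : Fin m) : ℤˣ := if ∀ i < j, Γ k i = 0 then -1 else 1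

noncomputable def twistedSign : Sym2 (Fin n ⊕ Fin m) → ℤˣ :=
  bipartiteLift (fun k j => unitSign (Γ k j)) * bipartiteLift (leadSign Γ)

variable {Γ}

lemma leadSign_mul_leadSign {k : Fin n}
    (hrow : AtMostTwoNonzero (Γ k))
    {i j : Fin m} (hij : i ≠ j) (hi : Γ k i ≠ 0) (hj : Γ k j ≠ 0) :
    leadSign Γ k i * leadSign Γ k j = -1 := by
  wlog hlt : i < j generalizing i j
  · rw [mul_comm]; exact this hij.symm hj hi (lt_of_le_of_ne (not_lt.1 hlt) hij.symm)
  have hfirst : ∀ l < i, Γ k l = 0 := fun l hl => by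
    by_contra hl0
    rcases hrow i j l hi hj hl0 with h | h | h <;> omega
  rw [leadSign, leadSign, if_pos hfirst, if_neg (fun h => hi (h i hlt))]
  rfl

def srEdge : ∀ {x y : Fin n ⊕ Fin m}, (srGraph Γ).Adj x y → (SRofMatrix Γ).E
  | .inl k, .inr j, h => ⟨(k, j), h⟩
  | .inr j, .inl k, h => ⟨(k, j), h⟩
  | .inl _, .inl _, h => h.elim
  | .inr _, .inr _, h => h.elim

variable {x y z x' y' : Fin n ⊕ Fin m}

lemma inc_srEdge_left (h : (srGraph Γ).Adj x y) : (SRofMatrix Γ).inc (srEdge h) x := by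
  rcases x with k | j <;> rcases y with k' | j'
  all_goals first | exact h.elim | exact Or.inl rfl | exact Or.inr rfl

lemma inc_srEdge_right (h : (srGraph Γ).Adj x y) : (SRofMatrix Γ).inc (srEdge h) y := by
  rcases x with k | j <;> rcases y with k' | j'
  all_goals first | exact h.elim | exact Or.inl rfl | exact Or.inr rfl

lemma sym2_eq_of_srEdge_eq (h : (srGraph Γ).Adj x y) (h' : (srGraph Γ).Adj x' y')
    (he : srEdge h = srEdge h') : s(x, y) = s(x', y') := by
  rcases x with k | j <;> rcases y with k' | j' <;> rcases x' with l | i <;>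
    rcases y' with l' | i'
  all_goals first | exact h.elim | exact h'.elim | skip
  all_goals
    simp only [srEdge] at he
    obtain ⟨rfl, rfl⟩ := he
    first | rfl | exact Sym2.eq_swap

lemma sgn_srEdge (h : (srGraph Γ).Adj x y) :
    (SRofMatrix Γ).sgn (srEdge h) = (bipartiteLift (fun k j => unitSign (Γ k j)) s(x, y) : ℤ) := by
  rcases x with k | j <;> rcases y with k' | j'
  all_goals first | exact h.elim | skip
  all_goals
    simp only [SRofMatrix, srEdge, unitSign, bipartiteLift, Sym2.lift_mk]
    split_ifs <;> rfl

lemma bipartiteLift_leadSign_mul_of_adj (hrow : ∀ k, AtMostTwoNonzero (Γ k))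
    (hxy : (srGraph Γ).Adj x y) (hyz : (srGraph Γ).Adj y z) (hy : y.isLeft) (hxz : x ≠ z) :
    bipartiteLift (leadSign Γ) s(x, y) * bipartiteLift (leadSign Γ) s(y, z) = -1 := by
  rcases x with k | i <;> rcases y with k' | j <;> rcases z with k'' | l
  all_goals first | exact hxy.elim | exact hyz.elim | simp at hy
  rw [Sym2.eq_swap]
  exact leadSign_mul_leadSign (hrow k') (fun h => hxz (h ▸ rfl)) hxy hyz

variable {u : Fin n ⊕ Fin m}

def cyclePath (c : (srGraph Γ).Walk u u) (hc : c.IsCycle) : (SRofMatrix Γ).Path c.length where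
  vert i := c.getVert i
  edge i := srEdge (c.adj_getVert_succ i.isLt)
  edge_src i := inc_srEdge_left _
  edge_tgt i := inc_srEdge_right _
  edge_inj i j hij := by
    have hi : i.val < c.edges.length := by simp
    have hj : j.val < c.edges.length := by simp
    have he := sym2_eq_of_srEdge_eq _ _ hij
    rw [← Walk.getElem_edges hi, ← Walk.getElem_edges hj] at he
    exact Fin.ext ((hc.edges_nodup.getElem_inj_iff).1 he)
  vert_nodup i j hij := by
    replace hij : c.getVert i = c.getVert j := hij
    have hi := Nat.lt_succ_iff.1 i.isLt
    have hj := Nat.lt_succ_iff.1 j.isLt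
    simp only [Fin.ext_iff, Fin.val_zero, Fin.val_last]
    by_cases hi0 : i.val = 0
    · rw [hi0, Walk.getVert_zero, eq_comm, hc.getVert_endpoint_iff hj] at hij
      omega
    by_cases hj0 : j.val = 0
    · rw [hj0, Walk.getVert_zero, hc.getVert_endpoint_iff hi] at hij
      omega
    exact Or.inl (hc.getVert_injOn ⟨by omega, hi⟩ ⟨by omega, hj⟩ hij)

lemma cyclePath_isCycle (c : (srGraph Γ).Walk u u) (hc : c.IsCycle) :
    (cyclePath c hc).IsCycle :=
  ⟨by have := hc.three_le_length; omega, c.getVert_length.trans c.getVert_zero.symm⟩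

lemma even_length_iff_isLeft_iff {v : Fin n ⊕ Fin m} (p : (srGraph Γ).Walk u v) :
    Even p.length ↔ (u.isLeft ↔ v.isLeft) :=
  (srColoring Γ).even_length_iff_congr p

theorem parity_cyclePath (hrow : ∀ k, AtMostTwoNonzero (Γ k))
    (c : (srGraph Γ).Walk u u) (hc : c.IsCycle) (hu : u.isRight) :
    (cyclePath c hc).parity = ((c.edges.map (twistedSign Γ)).prod : ℤ) := by
  obtain ⟨N, hN⟩ : 2 ∣ c.length := ((even_length_iff_isLeft_iff c).2 Iff.rfl).two_dvd
  set f : ℕ → ℤˣ := fun i =>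
    bipartiteLift (fun k j => unitSign (Γ k j)) s(c.getVert i, c.getVert (i + 1))
  set g : ℕ → ℤˣ := fun i => bipartiteLift (leadSign Γ) s(c.getVert i, c.getVert (i + 1))
  -- each S-vertex `c.getVert (2 * t + 1)` lies between two distinct columns of its row
  have hpair : ∀ t ∈ Finset.range N, g (2 * t) * g (2 * t + 1) = -1 := by
    intro t ht
    rw [Finset.mem_range] at ht
    have hodd := even_length_iff_isLeft_iff (c.take (2 * t + 1))
    rw [Walk.take_length, min_eq_left (by omega)] at hodd
    have hne := hc.getVert_sub_one_ne_getVert_add_one (i := 2 * t + 1) (by omega)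
    simp only [Nat.add_sub_cancel] at hne
    refine bipartiteLift_leadSign_mul_of_adj hrow (c.adj_getVert_succ (by omega))
      (c.adj_getVert_succ (by omega)) ?_ hne
    cases u <;> simp_all [Nat.not_even_bit1]
  calc (cyclePath c hc).parity = (-1) ^ N * ∏ i ∈ Finset.range c.length, (f i : ℤ) := by
        rw [Path.parity, Path.sign, show c.length / 2 = N by omega,
          ← Fin.prod_univ_eq_prod_range]
        exact congrArg _ (Finset.prod_congr rfl fun i _ => sgn_srEdge _)
    _ = (((∏ i ∈ Finset.range c.length, f i) *
          ∏ t ∈ Finset.range N, (g (2 * t) * g (2 * t + 1)) : ℤˣ) : ℤ) := by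
        rw [Finset.prod_congr rfl hpair, Finset.prod_const, Finset.card_range]
        push_cast
        ring
    _ = ((c.edges.map (twistedSign Γ)).prod : ℤ) := by
        rw [← Finset.prod_range_two_mul, ← hN, ← Finset.prod_mul_distrib,
          Walk.prod_map_edges_eq_prod_range]
        rfl

theorem prod_twistedSign_eq_one (hrow : ∀ k, AtMostTwoNonzero (Γ k))
    (hno : ¬ (SRofMatrix Γ).HasOCycle) (c : (srGraph Γ).Walk u u) (hc : c.IsCycle) :
    (c.edges.map (twistedSign Γ)).prod = 1 := by
  wlog hu : u.isRight generalizing u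
  · have hmem := c.getVert_mem_support 1
    have hv : (c.getVert 1).isRight := by
      have := (even_length_iff_isLeft_iff (c.take 1)).not
      rw [Walk.take_length, min_eq_left (by have := hc.three_le_length; omega)] at this
      cases u <;> simp_all
    rw [← ((c.rotate_edges _ hmem).map _).perm.prod_eq]
    exact this _ (hc.rotate hmem) hv
  have hpar := parity_cyclePath hrow c hc hu
  rcases Int.units_eq_one_or (c.edges.map (twistedSign Γ)).prod with h | h
  · exact h
  · exact (hno ⟨_, cyclePath c hc, cyclePath_isCycle c hc, by rw [hpar, h]; rfl⟩).elim

theorem mul_mul_nonpos_of_isPotential {φ : Fin n ⊕ Fin m → ℤˣ}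
    (hφ : IsPotential (srGraph Γ) (twistedSign Γ) φ) {k : Fin n}
    (hrow : AtMostTwoNonzero (Γ k))
    {i j : Fin m} (hij : i ≠ j) :
    ((φ (.inr i) : ℤ) : ℝ) * (φ (.inr j) : ℤ) * Γ k i * Γ k j ≤ 0 := by
  by_cases hi : Γ k i = 0
  · simp [hi]
  by_cases hj : Γ k j = 0
  · simp [hj]
  have hφi : φ (.inl k) * φ (.inr i) = unitSign (Γ k i) * leadSign Γ k i :=
    hφ (u := .inl k) (v := .inr i) hi
  have hφj : φ (.inl k) * φ (.inr j) = unitSign (Γ k j) * leadSign Γ k j :=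
    hφ (u := .inl k) (v := .inr j) hj
  have hunits : φ (.inr i) * φ (.inr j) = -(unitSign (Γ k i) * unitSign (Γ k j)) := by
    calc φ (.inr i) * φ (.inr j) = (φ (.inl k) * φ (.inr i)) * (φ (.inl k) * φ (.inr j)) := by
          rw [mul_mul_mul_comm, Int.units_mul_self, one_mul]
      _ = unitSign (Γ k i) * unitSign (Γ k j) * (leadSign Γ k i * leadSign Γ k j) := by
          rw [hφi, hφj, mul_mul_mul_comm]
      _ = -(unitSign (Γ k i) * unitSign (Γ k j)) := by
          rw [leadSign_mul_leadSign hrow hij hi hj, mul_neg_one]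
  have hreal : ((φ (.inr i) : ℤ) : ℝ) * (φ (.inr j) : ℤ)
      = -(((unitSign (Γ k i) : ℤ) : ℝ) * (unitSign (Γ k j) : ℤ)) := by
    exact_mod_cast congrArg (fun a : ℤˣ => ((a : ℤ) : ℝ)) hunits
  calc ((φ (.inr i) : ℤ) : ℝ) * (φ (.inr j) : ℤ) * Γ k i * Γ k j
      = -((((unitSign (Γ k i) : ℤ) : ℝ) * Γ k i) * (((unitSign (Γ k j) : ℤ) : ℝ) * Γ k j)) := by
        rw [hreal]; ring
    _ = -(|Γ k i| * |Γ k j|) := by rw [unitSign_mul_self, unitSign_mul_self]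
    _ ≤ 0 := neg_nonpos.2 (by positivity)

end SRMatrix

/-- If every row of `Γ` has at most two nonzero entries (i.e. the
SR graph of `Γ` has S-degree at most 2) and the SR graph of `Γ` contains no
o-cycle, then `Γ` is R-sortable: there is a signing `d : {±1}^m` of the columns
such that `d i * d j * Γ k i * Γ k j ≤ 0` for every row `k` and all distinct
columns `i ≠ j`. -/
theorem stmt4 {n m : ℕ} (Γ : Matrix (Fin n) (Fin m) ℝ)
    (hrow : ∀ k : Fin n, ∀ i j l : Fin m,
      Γ k i ≠ 0 → Γ k j ≠ 0 → Γ k l ≠ 0 → i = j ∨ i = l ∨ j = l)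
    (hno : ¬ (SRofMatrix Γ).HasOCycle) :
    ∃ d : Fin m → ℝ, (∀ i, d i = 1 ∨ d i = -1) ∧
      ∀ (k : Fin n) (i j : Fin m), i ≠ j → d i * d j * Γ k i * Γ k j ≤ 0 := by
  obtain ⟨φ, hφ⟩ := exists_isPotential_of_forall_isCycle (Set.toFinite _)
    fun _ c hc => prod_twistedSign_eq_one hrow hno c hc
  refine ⟨fun j => ((φ (.inr j) : ℤ) : ℝ), fun j => ?_,
    fun k i j hij => mul_mul_nonpos_of_isPotential hφ (hrow k) hij⟩
  rcases Int.units_eq_one_or (φ (.inr j)) with h | h <;> simp [h]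
end

section
/- Let Γ ∈ ℝ^{n×m} be S-sorted, i.e., for every column index j and all distinct row indices i, k one has Γ_{ij} Γ_{kj} ≤ 0. Then for every matrix V ∈ ℝ^{m×n} satisfying the N1C sign pattern relative to Γ, the product ΓV ∈ ℝ^{n×n} has nonnegative off-diagonal entries: (ΓV)_{ik} ≥ 0 for all i ≠ k. (Hence generalised interconversion networks with N1C kinetics give rise to cooperative dynamical systems.) -/
/-- If `Γ` is S-sorted (any two distinct rows have entrywise
products `≤ 0` in every column), then for every matrix `V` satisfying the N1C
sign pattern relative to `Γ` (`Γ i j * V j i ≤ 0` and `Γ i j = 0 → V j i = 0`),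
the product `Γ * V` has nonnegative off-diagonal entries. -/
theorem stmt6 {n m : ℕ} (Γ : Matrix (Fin n) (Fin m) ℝ)
    (hsort : ∀ (j : Fin m) (i k : Fin n), i ≠ k → Γ i j * Γ k j ≤ 0)
    (V : Matrix (Fin m) (Fin n) ℝ)
    (hV : ∀ (i : Fin n) (j : Fin m), Γ i j * V j i ≤ 0 ∧ (Γ i j = 0 → V j i = 0)) :
    ∀ (i k : Fin n), i ≠ k → 0 ≤ (Γ * V) i k := by
  intro i k hik
  rw [Matrix.mul_apply]
  apply Finset.sum_nonneg
  intro j _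
  obtain ⟨h1, h2⟩ := hV k j
  have hs := hsort j i k hik
  rcases lt_trichotomy (Γ k j) 0 with h | h | h
  · have hv : 0 ≤ V j k := nonneg_of_mul_nonpos_left (mul_comm (Γ k j) (V j k) ▸ h1) h
    have hg : 0 ≤ Γ i j := nonneg_of_mul_nonpos_left hs h
    exact mul_nonneg hg hv
  · simp [h2 h]
  · have hv : V j k ≤ 0 := nonpos_of_mul_nonpos_right h1 h
    have hg : Γ i j ≤ 0 := nonpos_of_mul_nonpos_right (mul_comm (Γ i j) (Γ k j) ▸ hs) h
    nlinarith
end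

section
/- (Proposition on S-simplicial cones) Let Γ ∈ ℝ^{n×m} have linearly independent columns Γ_1,…,Γ_m and be R-sortable: there exists d ∈ {−1,+1}^m such that for every row k and distinct columns i, j, d_i d_j Γ_{ki} Γ_{kj} ≤ 0. Then the simplicial cone K = {Σ_{k=1}^m a_k d_k Γ_k : a_k ≥ 0} ⊆ Im(Γ), whose m extremal rays are spanned by the vectors d_k Γ_k (so each reaction vector is collinear with an extremal ray of K), is preserved by every associated N1C reaction system restricted to invariant stoichiometry classes: for every q ≥ 0, every x_in ∈ ℝ^n_{≥0}, every C¹ map v : ℝ^n_{≥0} → ℝ^m that is N1C relative to Γ, and every pair of solutions x, y : [0,T] → ℝ^n_{≥0} of ż = q(x_in − z) + Γ v(z), if x(0) − y(0) ∈ K then x(t) − y(t) ∈ K for all t ∈ [0,T]. -/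
/-- The nonnegative orthant in `ℝ^n`. -/
def orthant (n : ℕ) : Set (Fin n → ℝ) := {x | ∀ i, 0 ≤ x i}

/-- A `C¹` reaction-rate function `v` on the nonnegative orthant is N1C relative to
the stoichiometric matrix `Γ` if, at every point of the orthant,
`Γ i j * ∂v_j/∂x_i ≤ 0` for all `i, j`, and `∂v_j/∂x_i` vanishes identically
whenever `Γ i j = 0`. -/
def IsN1C {n m : ℕ} (Γ : Matrix (Fin n) (Fin m) ℝ)
    (v : (Fin n → ℝ) → Fin m → ℝ) : Prop :=
  ContDiffOn ℝ 1 v (orthant n) ∧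
  ∀ x ∈ orthant n, ∀ (i : Fin n) (j : Fin m),
    Γ i j * fderivWithin ℝ v (orthant n) x (Pi.single i 1) j ≤ 0 ∧
    (Γ i j = 0 → fderivWithin ℝ v (orthant n) x (Pi.single i 1) j = 0)

/-- `x : [0,T] → ℝ^n` is a solution of `ż = q (x_in − z) + Γ v(z)` remaining in
the nonnegative orthant. -/
def IsSol {n m : ℕ} (Γ : Matrix (Fin n) (Fin m) ℝ) (q : ℝ) (x_in : Fin n → ℝ)
    (v : (Fin n → ℝ) → Fin m → ℝ) (T : ℝ) (x : ℝ → Fin n → ℝ) : Prop :=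
  ∀ t ∈ Set.Icc (0 : ℝ) T, x t ∈ orthant n ∧
    HasDerivWithinAt x (q • (x_in - x t) + Γ.mulVec (v (x t))) (Set.Icc (0 : ℝ) T) t

/-- The simplicial cone generated by the signed reaction vectors `d k • Γ_k`,
whose extremal rays are spanned by the vectors `d k • Γ_k`. -/
def coneOf {n m : ℕ} (Γ : Matrix (Fin n) (Fin m) ℝ) (d : Fin m → ℝ) :
    Set (Fin n → ℝ) :=
  {w | ∃ a : Fin m → ℝ, (∀ k, 0 ≤ a k) ∧ w = fun i => ∑ k, a k * d k * Γ i k}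

/-!
Write `x - y = (Γ D) a` with `D = diagonal d`; the cone is `a ≥ 0`. Since
`ẋ - ẏ = -q (x - y) + (Γ D) (D (v x - v y))`, the component of `x - y` transverse to `Im Γ`
solves `ż = -q z` from `0`, so `x - y` stays in `Im Γ` and `ȧ = -q a + D (v x - v y)`.
Along the segment from `y` to `x`, `D (v x - v y)` has derivative `M a` with `M = D J (Γ D)`,
`J` the Jacobian of `v`, and N1C together with R-sortability makes `M` Metzler (nonnegative off
the diagonal). Hence when a coordinate `a_k` sits at the lowest level `-δ`, `ȧ_k ≥ -Λ δ` with `Λ`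
a bound for `M` on the compact set of segments, so the barrier `-ε e^{(Λ+1) t}` is never crossed;
letting `ε → 0` gives `a ≥ 0`.
-/

open Set Filter Topology Matrix

lemma orthant_eq_pi (n : ℕ) : orthant n = univ.pi fun _ => Ici (0 : ℝ) := by
  ext; simp [orthant, Pi.le_def]

lemma uniqueDiffOn_orthant (n : ℕ) : UniqueDiffOn ℝ (orthant n) := by
  rw [orthant_eq_pi]
  exact UniqueDiffOn.univ_pi fun _ => uniqueDiffOn_Ici 0

lemma convex_orthant (n : ℕ) : Convex ℝ (orthant n) := by
  rw [orthant_eq_pi]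
  exact convex_pi fun _ _ => convex_Ici 0

lemma eventually_lt_of_hasDerivWithinAt_Ioi {f : ℝ → ℝ} {f' x : ℝ}
    (hf : HasDerivWithinAt f f' (Ioi x) x) (hf' : 0 < f') : ∀ᶠ z in 𝓝[>] x, f x < f z := by
  filter_upwards [(hasDerivWithinAt_iff_tendsto_slope' (lt_irrefl x)).1 hf (Ioi_mem_nhds hf'),
    self_mem_nhdsWithin] with z hslope hz
  rw [mem_preimage, slope_def_field, mem_Ioi] at hslope
  exact sub_pos.1 ((div_pos_iff_of_pos_right (sub_pos.2 hz)).1 hslope)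

section QuasiMonotone

variable {ι : Type*} [Fintype ι] {a a' : ℝ → ι → ℝ} {T Λ : ℝ}

lemma neg_mul_exp_le_of_quasiMonotone {ε : ℝ} (hε : 0 < ε)
    (ha : ∀ t ∈ Icc 0 T, HasDerivWithinAt a (a' t) (Icc 0 T) t)
    (h0 : ∀ k, 0 ≤ a 0 k)
    (hquasi : ∀ t ∈ Icc 0 T, ∀ δ > 0, ∀ k, (∀ j, -δ ≤ a t j) → a t k = -δ → -(Λ * δ) ≤ a' t k) :
    ∀ t ∈ Icc 0 T, ∀ k, -(ε * Real.exp ((Λ + 1) * t)) ≤ a t k := by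
  set B : ℝ → ℝ := fun t => ε * Real.exp ((Λ + 1) * t)
  have hB : ∀ t, HasDerivAt B ((Λ + 1) * B t) t := fun t => by
    refine ((((hasDerivAt_id t).const_mul (Λ + 1)).exp).const_mul ε).congr_deriv ?_
    simp only [B, id]; ring
  have hcont : ∀ k, ContinuousOn (fun t => a t k + B t) (Icc 0 T) := fun k t ht =>
    (hasDerivWithinAt_pi.1 (ha t ht) k).continuousWithinAt.add
      (hB t).continuousAt.continuousWithinAt
  set s := {t | ∀ k, 0 ≤ a t k + B t}
  suffices Icc 0 T ⊆ s from fun t ht k => by linarith [this ht k]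
  refine IsClosed.Icc_subset_of_forall_mem_nhdsWithin ?_ ?_ ?_
  · have : s ∩ Icc 0 T = Icc 0 T ∩ ⋂ k, Icc 0 T ∩ (fun t => a t k + B t) ⁻¹' Ici 0 := by
      ext t
      simp only [s, mem_inter_iff, mem_ofPred_eq, mem_iInter, mem_preimage, mem_Ici]
      exact ⟨fun h => ⟨h.2, fun k => ⟨h.2, h.1 k⟩⟩, fun h => ⟨fun k => (h.2 k).2, h.1⟩⟩
    rw [this]
    exact isClosed_Icc.inter
      (isClosed_iInter fun k => (hcont k).preimage_isClosed_of_isClosed isClosed_Icc isClosed_Ici)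
  · intro k
    simp only [B, mul_zero, Real.exp_zero, mul_one]
    linarith [h0 k]
  · rintro x ⟨hxs, hx⟩
    have hIcc : Icc 0 T ∈ 𝓝[>] x := Icc_mem_nhdsGT_of_mem hx
    refine eventually_all.2 fun k => ?_
    rcases (hxs k).lt_or_eq with hpos | hzero
    · exact ((hcont k x (Ico_subset_Icc_self hx)).mono_of_mem_nhdsWithin hIcc).eventually
        (lt_mem_nhds hpos) |>.mono fun _ => le_of_lt
    -- Where `a_k` touches the barrier, `(a_k + B)' ≥ -Λ B + (Λ + 1) B = B > 0`.
    · have hBx : 0 < B x := by positivity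
      have hder : -(Λ * B x) ≤ a' x k :=
        hquasi x (Ico_subset_Icc_self hx) (B x) hBx k (fun j => by linarith [hxs j])
          (by linarith)
      have hsum := (hasDerivWithinAt_pi.1 (ha x (Ico_subset_Icc_self hx)) k).add
        (hB x).hasDerivWithinAt |>.mono_of_mem_nhdsWithin hIcc
      filter_upwards [eventually_lt_of_hasDerivWithinAt_Ioi hsum (by nlinarith)] with z hz
      simp only [Pi.add_apply] at hz
      linarith

lemma nonneg_of_quasiMonotone
    (ha : ∀ t ∈ Icc 0 T, HasDerivWithinAt a (a' t) (Icc 0 T) t)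
    (h0 : ∀ k, 0 ≤ a 0 k)
    (hquasi : ∀ t ∈ Icc 0 T, ∀ δ > 0, ∀ k, (∀ j, -δ ≤ a t j) → a t k = -δ → -(Λ * δ) ≤ a' t k) :
    ∀ t ∈ Icc 0 T, ∀ k, 0 ≤ a t k := by
  intro t ht k
  refine le_of_forall_pos_le_add fun ε hε => ?_
  have hE : 0 < Real.exp ((Λ + 1) * t) := Real.exp_pos _
  have := neg_mul_exp_le_of_quasiMonotone (div_pos hε hE) ha h0 hquasi t ht k
  rw [div_mul_cancel₀ _ hE.ne'] at this
  linarith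

end QuasiMonotone

lemma apply_leftInverse_eq_of_hasDerivWithinAt {E F : Type*} [NormedAddCommGroup E]
    [NormedSpace ℝ E] [NormedAddCommGroup F] [NormedSpace ℝ F] {G : F →L[ℝ] E} {L : E →L[ℝ] F}
    (hLG : ∀ u, L (G u) = u) {w : ℝ → E} {c : ℝ → F} {q T : ℝ}
    (hw : ∀ t ∈ Icc 0 T, HasDerivWithinAt w (-q • w t + G (c t)) (Icc 0 T) t)
    (h0 : G (L (w 0)) = w 0) :
    ∀ t ∈ Icc 0 T, G (L (w t)) = w t := by
  set f : ℝ → E := fun t => w t - G (L (w t))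
  have hf : ∀ t ∈ Icc 0 T, HasDerivWithinAt f (-q • f t) (Icc 0 T) t := fun t ht => by
    refine ((hw t ht).sub ((G.comp L).hasFDerivAt.comp_hasDerivWithinAt t (hw t ht))).congr_deriv ?_
    simp only [f, ContinuousLinearMap.comp_apply, map_add, map_smul, hLG]
    rw [smul_sub]; abel
  have hf0 : EqOn f 0 (Icc 0 T) := by
    refine ODE_solution_unique (v := fun _ z => -q • z) (fun _ => lipschitzWith_smul (-q))
      (fun t ht => (hf t ht).continuousWithinAt)
      (fun t ht => (hf t (Ico_subset_Icc_self ht)).mono_of_mem_nhdsWithin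
        (Icc_mem_nhdsGE_of_mem ht))
      continuousOn_const (fun t _ => ?_) (by simp [f, h0])
    exact (hasDerivWithinAt_const t (Ici t) (0 : E)).congr_deriv (by simp)
  exact fun t ht => (sub_eq_zero.1 (hf0 ht)).symm

lemma exists_clm_leftInverse_mulVec {ι κ : Type*} [Fintype ι] [Fintype κ] [DecidableEq κ]
    {M : Matrix ι κ ℝ} (hM : Function.Injective M.mulVec) :
    ∃ L : (ι → ℝ) →L[ℝ] κ → ℝ, ∀ u, L (M *ᵥ u) = u := by
  obtain ⟨L, hL⟩ := M.mulVecLin.exists_leftInverse_of_injective (LinearMap.ker_eq_bot.2 hM)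
  exact ⟨LinearMap.toContinuousLinearMap L, LinearMap.congr_fun hL⟩

lemma mul_nonneg_of_signPattern {g e s : ℝ} (hge : g * e ≤ 0) (hg : g = 0 → e = 0)
    (hs : s * g ≤ 0) : 0 ≤ s * e := by
  rcases eq_or_ne g 0 with rfl | hg0
  · simp [hg rfl]
  have : 0 ≤ g ^ 2 * (s * e) := by nlinarith [mul_nonneg_of_nonpos_of_nonpos hs hge]
  exact (mul_nonneg_iff_of_pos_left (by positivity)).1 this

lemma neg_mul_sum_abs_le_sum_mul {κ : Type*} [Fintype κ] {M a : κ → ℝ} {k : κ} {δ : ℝ}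
    (hM : ∀ j ≠ k, 0 ≤ M j) (ha : ∀ j, -δ ≤ a j) (hak : |a k| ≤ δ) :
    -(δ * ∑ j, |M j|) ≤ ∑ j, M j * a j := by
  rw [Finset.mul_sum, ← Finset.sum_neg_distrib]
  refine Finset.sum_le_sum fun j _ => ?_
  rcases eq_or_ne j k with rfl | hjk
  · have := neg_abs_le (M j * a j)
    rw [abs_mul] at this
    linarith [mul_le_mul_of_nonneg_left hak (abs_nonneg (M j))]
  · rw [abs_of_nonneg (hM j hjk)]
    nlinarith [mul_le_mul_of_nonneg_left (ha j) (hM j hjk)]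

lemma offDiag_nonneg_of_sorted {ι κ : Type*} [Fintype ι] [Fintype κ] [DecidableEq κ]
    {Γ : Matrix ι κ ℝ} {d : κ → ℝ} {J : Matrix κ ι ℝ}
    (hsort : ∀ (r : ι) (i j : κ), i ≠ j → d i * d j * Γ r i * Γ r j ≤ 0)
    (hsign : ∀ r k, Γ r k * J k r ≤ 0) (hzero : ∀ r k, Γ r k = 0 → J k r = 0)
    {j k : κ} (hjk : j ≠ k) : 0 ≤ (diagonal d * J * (Γ * diagonal d)) k j := by
  rw [mul_apply]
  simp only [diagonal_mul, mul_diagonal]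
  refine Finset.sum_nonneg fun r _ => ?_
  have := mul_nonneg_of_signPattern (hsign r k) (hzero r k)
    (s := d k * d j * Γ r j) (by linarith [hsort r k j hjk.symm])
  linarith

lemma injective_mulVec_mul_diagonal {ι κ : Type*} [Fintype κ] [DecidableEq κ]
    {Γ : Matrix ι κ ℝ} (hli : LinearIndependent ℝ Γ.col) {d : κ → ℝ} (hd : ∀ k, d k ≠ 0) :
    Function.Injective (Γ * diagonal d).mulVec := by
  intro u u' h
  simp only [← mulVec_mulVec] at h
  funext k
  simpa [mulVec_diagonal, hd k] using congrFun (mulVec_injective_iff.2 hli h) k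

lemma mem_coneOf_iff {n m : ℕ} {Γ : Matrix (Fin n) (Fin m) ℝ} {d : Fin m → ℝ}
    {w : Fin n → ℝ} : w ∈ coneOf Γ d ↔ ∃ a, (∀ k, 0 ≤ a k) ∧ w = (Γ * diagonal d) *ᵥ a := by
  have (a : Fin m → ℝ) : (fun i => ∑ k, a k * d k * Γ i k) = (Γ * diagonal d) *ᵥ a := by
    ext i; simp only [mulVec, dotProduct, mul_diagonal]
    exact Finset.sum_congr rfl fun k _ => by ring
  simp only [coneOf, mem_ofPred_eq, this]

lemma exists_bound_on_segments {E : Type*} [NormedAddCommGroup E] [NormedSpace ℝ E]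
    {S : Set E} {φ : E → ℝ} (hφ : ContinuousOn φ S) {x y : ℝ → E} {T : ℝ}
    (hx : ContinuousOn x (Icc 0 T)) (hy : ContinuousOn y (Icc 0 T))
    (hS : ∀ t ∈ Icc 0 T, ∀ s ∈ Icc (0 : ℝ) 1, y t + s • (x t - y t) ∈ S) :
    ∃ Λ, ∀ t ∈ Icc 0 T, ∀ s ∈ Icc (0 : ℝ) 1, φ (y t + s • (x t - y t)) ≤ Λ := by
  have hseg : ContinuousOn (fun p : ℝ × ℝ => y p.1 + p.2 • (x p.1 - y p.1))
      (Icc 0 T ×ˢ Icc 0 1) :=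
    (hy.comp continuousOn_fst fun _ h => h.1).add
      (continuousOn_snd.smul ((hx.comp continuousOn_fst fun _ h => h.1).sub
        (hy.comp continuousOn_fst fun _ h => h.1)))
  obtain ⟨Λ, hΛ⟩ := (isCompact_Icc.prod isCompact_Icc).bddAbove_image
    (hφ.comp hseg fun p hp => hS p.1 hp.1 p.2 hp.2)
  exact ⟨Λ, fun t ht s hs => hΛ ⟨(t, s), ⟨ht, hs⟩, rfl⟩⟩

noncomputable def jacobianWithin {n m : ℕ} (v : (Fin n → ℝ) → Fin m → ℝ) (s : Set (Fin n → ℝ))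
    (ξ : Fin n → ℝ) : Matrix (Fin m) (Fin n) ℝ :=
  LinearMap.toMatrix' (fderivWithin ℝ v s ξ).toLinearMap

lemma jacobianWithin_mulVec {n m : ℕ} (v : (Fin n → ℝ) → Fin m → ℝ) (s : Set (Fin n → ℝ))
    (ξ u : Fin n → ℝ) : jacobianWithin v s ξ *ᵥ u = fderivWithin ℝ v s ξ u :=
  LinearMap.toMatrix'_mulVec _ u

-- The Jacobian of `z ↦ d • v z` applied to the signed reaction vectors `d j • Γ_j`:
-- the linearisation of the dynamics in the coordinates of `coneOf Γ d`.
noncomputable def coneJacobian {n m : ℕ} (Γ : Matrix (Fin n) (Fin m) ℝ) (d : Fin m → ℝ)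
    (v : (Fin n → ℝ) → Fin m → ℝ) (ξ : Fin n → ℝ) : Matrix (Fin m) (Fin m) ℝ :=
  diagonal d * jacobianWithin v (orthant n) ξ * (Γ * diagonal d)

section N1C

variable {n m : ℕ} {Γ : Matrix (Fin n) (Fin m) ℝ} {v : (Fin n → ℝ) → Fin m → ℝ}
  {d : Fin m → ℝ}

lemma IsN1C.continuousOn_jacobianWithin (hv : IsN1C Γ v) :
    ContinuousOn (jacobianWithin v (orthant n)) (orthant n) := by
  have hF := hv.1.continuousOn_fderivWithin (uniqueDiffOn_orthant n) le_rfl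
  refine continuousOn_pi.2 fun k => continuousOn_pi.2 fun r => ?_
  exact ((continuous_apply k).comp_continuousOn (hF.clm_apply continuousOn_const) :)

lemma IsN1C.offDiag_nonneg (hv : IsN1C Γ v)
    (hsort : ∀ (r : Fin n) (i j : Fin m), i ≠ j → d i * d j * Γ r i * Γ r j ≤ 0)
    {ξ : Fin n → ℝ} (hξ : ξ ∈ orthant n) {j k : Fin m} (hjk : j ≠ k) :
    0 ≤ coneJacobian Γ d v ξ k j :=
  offDiag_nonneg_of_sorted hsort (fun r k => (hv.2 ξ hξ r k).1) (fun r k => (hv.2 ξ hξ r k).2)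
    hjk

lemma IsN1C.continuousOn_coneJacobian (hv : IsN1C Γ v) :
    ContinuousOn (coneJacobian Γ d v) (orthant n) :=
  ((continuous_const.matrix_mul continuous_id).matrix_mul continuous_const).comp_continuousOn
    hv.continuousOn_jacobianWithin

lemma IsN1C.neg_mul_le_mul_sub (hv : IsN1C Γ v)
    (hsort : ∀ (r : Fin n) (i j : Fin m), i ≠ j → d i * d j * Γ r i * Γ r j ≤ 0)
    {p₀ p₁ : Fin n → ℝ} (hp₀ : p₀ ∈ orthant n) (hp₁ : p₁ ∈ orthant n) {a : Fin m → ℝ}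
    (hpa : p₁ - p₀ = (Γ * diagonal d) *ᵥ a) {k : Fin m} {δ Λ : ℝ} (hδ : 0 ≤ δ)
    (ha : ∀ j, -δ ≤ a j) (hak : |a k| ≤ δ)
    (hΛ : ∀ s ∈ Icc (0 : ℝ) 1, ∑ j, |coneJacobian Γ d v (p₀ + s • (p₁ - p₀)) k j| ≤ Λ) :
    -(δ * Λ) ≤ d k * (v p₁ k - v p₀ k) := by
  set ξ : ℝ → Fin n → ℝ := fun s => p₀ + s • (p₁ - p₀)
  have hξ : ∀ s ∈ Icc (0 : ℝ) 1, ξ s ∈ orthant n := fun s hs =>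
    (convex_orthant n).add_smul_sub_mem hp₀ hp₁ hs
  set g : ℝ → ℝ := fun s => d k * v (ξ s) k
  have hg : ∀ s ∈ Icc (0 : ℝ) 1,
      HasDerivWithinAt g (∑ j, coneJacobian Γ d v (ξ s) k j * a j) (Icc 0 1) s := by
    intro s hs
    have hξ' : HasDerivWithinAt ξ (p₁ - p₀) (Icc 0 1) s :=
      (((hasDerivAt_id s).smul_const (p₁ - p₀)).const_add p₀).hasDerivWithinAt.congr_deriv
        (one_smul _ _)
    have hvξ := (hv.1.differentiableOn one_ne_zero _ (hξ s hs)).hasFDerivWithinAt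
      |>.comp_hasDerivWithinAt s hξ' hξ
    refine ((hasDerivWithinAt_pi.1 hvξ k).const_mul (d k)).congr_deriv ?_
    rw [show ∑ j, coneJacobian Γ d v (ξ s) k j * a j = (coneJacobian Γ d v (ξ s) *ᵥ a) k from rfl,
      coneJacobian, Matrix.mul_assoc, ← mulVec_mulVec, mulVec_diagonal, ← mulVec_mulVec, ← hpa,
      jacobianWithin_mulVec]
  have hg' : ∀ s ∈ Icc (0 : ℝ) 1, -(δ * Λ) ≤ ∑ j, coneJacobian Γ d v (ξ s) k j * a j :=
    fun s hs => (neg_le_neg (mul_le_mul_of_nonneg_left (hΛ s hs) hδ)).trans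
      (neg_mul_sum_abs_le_sum_mul (fun j hj => hv.offDiag_nonneg hsort (hξ s hs) hj) ha hak)
  have hmono := image_le_of_deriv_right_le_deriv_boundary (a := 0) (b := 1)
    (f := fun s => g 0 - δ * Λ * s) (by fun_prop)
    (fun s _ => ((hasDerivAt_id s).const_mul (δ * Λ)).const_sub (g 0) |>.hasDerivWithinAt)
    (by simp) (fun s hs => (hg s hs).continuousWithinAt)
    (fun s hs => (hg s (Ico_subset_Icc_self hs)).mono_of_mem_nhdsWithin (Icc_mem_nhdsGE_of_mem hs))
    (fun s hs => by simpa using hg' s (Ico_subset_Icc_self hs)) (right_mem_Icc.2 zero_le_one)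
  simp only [g, ξ, zero_smul, one_smul, add_zero, add_sub_cancel, mul_one] at hmono
  linarith

lemma IsN1C.exists_bound_coneJacobian (hv : IsN1C Γ v) {q : ℝ} {x_in : Fin n → ℝ} {T : ℝ}
    {x y : ℝ → Fin n → ℝ} (hx : IsSol Γ q x_in v T x) (hy : IsSol Γ q x_in v T y) :
    ∃ Λ, ∀ t ∈ Icc 0 T, ∀ s ∈ Icc (0 : ℝ) 1, ∀ k,
      ∑ j, |coneJacobian Γ d v (y t + s • (x t - y t)) k j| ≤ Λ := by
  have hJ := hv.continuousOn_coneJacobian (d := d)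
  obtain ⟨Λ, hΛ⟩ := exists_bound_on_segments
    (φ := fun ξ => ∑ k, ∑ j, |coneJacobian Γ d v ξ k j|)
    (continuousOn_finsetSum _ fun k _ => continuousOn_finsetSum _ fun j _ =>
      continuous_abs.comp_continuousOn ((continuous_apply_apply k j).comp_continuousOn hJ))
    (fun t ht => (hx t ht).2.continuousWithinAt) (fun t ht => (hy t ht).2.continuousWithinAt)
    fun t ht s hs => (convex_orthant n).add_smul_sub_mem (hy t ht).1 (hx t ht).1 hs
  exact ⟨Λ, fun t ht s hs k => (Finset.single_le_sum (f := fun k => ∑ j, _)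
    (fun k _ => Finset.sum_nonneg fun j _ => abs_nonneg _) (Finset.mem_univ k)).trans
    (hΛ t ht s hs)⟩

end N1C

lemma IsSol.hasDerivWithinAt_sub {n m : ℕ} {Γ : Matrix (Fin n) (Fin m) ℝ} {q : ℝ}
    {x_in : Fin n → ℝ} {v : (Fin n → ℝ) → Fin m → ℝ} {T : ℝ} {x y : ℝ → Fin n → ℝ}
    (hx : IsSol Γ q x_in v T x) (hy : IsSol Γ q x_in v T y) :
    ∀ t ∈ Icc 0 T, HasDerivWithinAt (fun s => x s - y s)
      (-q • (x t - y t) + Γ *ᵥ (v (x t) - v (y t))) (Icc 0 T) t := fun t ht =>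
  ((hx t ht).2.sub (hy t ht).2).congr_deriv (by rw [mulVec_sub]; module)

lemma IsSol.sub_eq_mulVec_and_hasDerivWithinAt {n m : ℕ} {Γ : Matrix (Fin n) (Fin m) ℝ}
    {q : ℝ} {x_in : Fin n → ℝ} {v : (Fin n → ℝ) → Fin m → ℝ} {T : ℝ} {x y : ℝ → Fin n → ℝ}
    (hx : IsSol Γ q x_in v T x) (hy : IsSol Γ q x_in v T y) {d : Fin m → ℝ}
    {L : (Fin n → ℝ) →L[ℝ] Fin m → ℝ} (hLG : ∀ u, L ((Γ * diagonal d) *ᵥ u) = u)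
    (hdd : diagonal d * diagonal d = 1) {a₀ : Fin m → ℝ}
    (h0 : x 0 - y 0 = (Γ * diagonal d) *ᵥ a₀) :
    ∀ t ∈ Icc 0 T, x t - y t = (Γ * diagonal d) *ᵥ L (x t - y t) ∧
      HasDerivWithinAt (fun s => L (x s - y s))
        (-q • L (x t - y t) + diagonal d *ᵥ (v (x t) - v (y t))) (Icc 0 T) t := by
  set G := LinearMap.toContinuousLinearMap (Matrix.toLin' (Γ * diagonal d))
  -- Writing `Γ c = (Γ D) (D c)` moves the signs `d` from the reaction vectors to the rates.
  have hw : ∀ t ∈ Icc 0 T, HasDerivWithinAt (fun s => x s - y s)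
      (-q • (x t - y t) + G (diagonal d *ᵥ (v (x t) - v (y t)))) (Icc 0 T) t := by
    intro t ht
    convert hx.hasDerivWithinAt_sub hy t ht using 2
    simp [G, mulVec_mulVec, hdd]
  have hrange := apply_leftInverse_eq_of_hasDerivWithinAt hLG hw (by simp [G, h0, hLG])
  refine fun t ht => ⟨(hrange t ht).symm, ?_⟩
  refine (L.hasFDerivAt.comp_hasDerivWithinAt t (hw t ht)).congr_deriv ?_
  simp only [map_add, map_smul, G, LinearMap.coe_toContinuousLinearMap', Matrix.toLin'_apply, hLG]

/-- **Proposition on S-simplicial cones.** Let `Γ` have linearly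
independent columns and be R-sorted after signing its columns by `d : {±1}^m`.
Then the simplicial cone `K` generated by the vectors `d k • Γ_k` lies in `Im Γ`
and is preserved by every associated N1C reaction system: for any two solutions
`x, y` of `ż = q (x_in − z) + Γ v(z)` in the nonnegative orthant, if
`x 0 − y 0 ∈ K` then `x t − y t ∈ K` for all `t ∈ [0, T]`. -/
theorem stmt8 {n m : ℕ} (Γ : Matrix (Fin n) (Fin m) ℝ)
    (hli : LinearIndependent ℝ (fun j : Fin m => fun i : Fin n => Γ i j))
    (d : Fin m → ℝ) (hd : ∀ k, d k = 1 ∨ d k = -1)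
    (hsort : ∀ (k : Fin n) (i j : Fin m), i ≠ j → d i * d j * Γ k i * Γ k j ≤ 0) :
    coneOf Γ d ⊆ {w | ∃ u : Fin m → ℝ, w = Γ.mulVec u} ∧
    ∀ q : ℝ, 0 ≤ q → ∀ x_in : Fin n → ℝ, (∀ i, 0 ≤ x_in i) →
    ∀ v : (Fin n → ℝ) → Fin m → ℝ, IsN1C Γ v →
    ∀ T : ℝ, 0 ≤ T → ∀ x y : ℝ → Fin n → ℝ,
      IsSol Γ q x_in v T x → IsSol Γ q x_in v T y →
      x 0 - y 0 ∈ coneOf Γ d →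
      ∀ t ∈ Set.Icc (0 : ℝ) T, x t - y t ∈ coneOf Γ d := by
  have hdd : diagonal d * diagonal d = 1 := by
    rw [diagonal_mul_diagonal, ← diagonal_one]
    congr 1; funext k; rcases hd k with h | h <;> simp [h]
  refine ⟨fun w hw => ?_, ?_⟩
  · obtain ⟨a, -, rfl⟩ := mem_coneOf_iff.1 hw
    exact ⟨diagonal d *ᵥ a, (mulVec_mulVec _ _ _).symm⟩
  intro q hq x_in _ v hv T _ x y hx hy h0 t ht
  obtain ⟨L, hLG⟩ := exists_clm_leftInverse_mulVec (M := Γ * diagonal d)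
    (injective_mulVec_mul_diagonal hli fun k => by rcases hd k with h | h <;> simp [h])
  obtain ⟨a₀, ha₀, hw₀⟩ := mem_coneOf_iff.1 h0
  have hcoord := hx.sub_eq_mulVec_and_hasDerivWithinAt hy hLG hdd hw₀
  obtain ⟨Λ, hΛ⟩ := hv.exists_bound_coneJacobian (d := d) hx hy
  refine mem_coneOf_iff.2 ⟨L (x t - y t), nonneg_of_quasiMonotone (Λ := Λ)
    (fun s hs => (hcoord s hs).2) (fun k => ?_) ?_ t ht, (hcoord t ht).1⟩
  · simpa only [hw₀, hLG] using ha₀ k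
  intro s hs δ hδ k hlow hak
  have := hv.neg_mul_le_mul_sub hsort (hy s hs).1 (hx s hs).1 (hcoord s hs).1 hδ.le hlow
    (by rw [hak, abs_neg, abs_of_pos hδ]) fun r hr => hΛ s hs r hr k
  simp only [Pi.add_apply, Pi.smul_apply, smul_eq_mul, mulVec_diagonal, Pi.sub_apply, hak]
  nlinarith [mul_nonneg hq hδ.le]
end

section
/- Let Γ ∈ ℝ^{5×3} have rows (−1,0,2), (−1,−1,0), (0,−1,−1), (1,0,0), (0,1,0); let T ∈ ℝ^{5×3} have rows (−1,0,2), (−1,1,0), (0,1,−1), (1,0,0), (0,−1,0); and let T' ∈ ℝ^{3×5} have rows (1,−2,2,0,0), (1,−1,2,0,0), (1,−1,1,0,0). Then T'T = I₃, and for every V ∈ ℝ^{3×5} satisfying the N1C sign pattern relative to Γ, the matrix J = T'ΓVT ∈ ℝ^{3×3} satisfies J_{ii} ≤ 0 for all i and J_{ij} ≥ 0 for all i ≠ j (i.e., the recoordinatised system for SYS 1 is cooperative). -/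
/-- `V` satisfies the N1C sign pattern relative to `Γ`. -/
def N1CPattern {n m : ℕ} (Γ : Matrix (Fin n) (Fin m) ℝ)
    (V : Matrix (Fin m) (Fin n) ℝ) : Prop :=
  ∀ (i : Fin n) (j : Fin m), Γ i j * V j i ≤ 0 ∧ (Γ i j = 0 → V j i = 0)

/-!
The re-signed matrix is `T = Γ D` with `D = diag(1, -1, 1)`, and `T' Γ = D`, so
`J = T' Γ V T = D (V Γ) D`. The diagonal entries `(V Γ)ᵢᵢ = Σₖ Vᵢₖ Γₖᵢ` are nonpositive by the
N1C pattern alone. Off the diagonal, `Vᵢₖ` has the sign opposite to `Γₖᵢ`, so `dᵢ dⱼ (V Γ)ᵢⱼ ≥ 0`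
follows once `dᵢ dⱼ Γₖᵢ Γₖⱼ ≤ 0` in every row `k`, which is checked on the three pairs of columns.
-/

open Matrix

namespace N1CPattern

variable {n m : ℕ} {Γ : Matrix (Fin n) (Fin m) ℝ} {V : Matrix (Fin m) (Fin n) ℝ}

theorem mul_apply_self_nonpos (hV : N1CPattern Γ V) (i : Fin m) : (V * Γ) i i ≤ 0 := by
  rw [mul_apply]
  exact Finset.sum_nonpos fun k _ => by simpa only [mul_comm] using (hV k i).1

theorem mul_mul_apply_nonneg (hV : N1CPattern Γ V) {i j : Fin m} {c : ℝ}
    (hc : ∀ k, c * (Γ k i * Γ k j) ≤ 0) : 0 ≤ c * (V * Γ) i j := by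
  rw [mul_apply, Finset.mul_sum]
  refine Finset.sum_nonneg fun k _ => ?_
  by_cases hki : Γ k i = 0
  · simp [(hV k i).2 hki]
  · have hsq : 0 < Γ k i ^ 2 := by positivity
    have hprod : 0 ≤ (Γ k i * V i k) * (c * (Γ k i * Γ k j)) :=
      mul_nonneg_of_nonpos_of_nonpos (hV k i).1 (hc k)
    have hrw : (Γ k i * V i k) * (c * (Γ k i * Γ k j)) = Γ k i ^ 2 * (c * (V i k * Γ k j)) := by
      ring
    rw [hrw] at hprod
    exact (mul_nonneg_iff_of_pos_left hsq).1 hprod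

end N1CPattern

theorem cooperative_of_signed_columns {n m : ℕ} (Γ : Matrix (Fin n) (Fin m) ℝ)
    (T' : Matrix (Fin m) (Fin n) ℝ) (d : Fin m → ℝ) (hT' : T' * Γ = diagonal d)
    (hsign : ∀ i j, i ≠ j → ∀ k, d i * d j * (Γ k i * Γ k j) ≤ 0)
    (V : Matrix (Fin m) (Fin n) ℝ) (hV : N1CPattern Γ V) :
    (∀ i, (T' * Γ * V * (Γ * diagonal d)) i i ≤ 0) ∧
      (∀ i j, i ≠ j → 0 ≤ (T' * Γ * V * (Γ * diagonal d)) i j) := by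
  have hJ : ∀ i j, (T' * Γ * V * (Γ * diagonal d)) i j = d i * d j * (V * Γ) i j := by
    intro i j
    rw [hT', Matrix.mul_assoc, ← Matrix.mul_assoc V, diagonal_mul, mul_diagonal]
    ring
  refine ⟨fun i => ?_, fun i j hij => ?_⟩
  · rw [hJ, ← sq]
    exact mul_nonpos_of_nonneg_of_nonpos (sq_nonneg _) (hV.mul_apply_self_nonpos i)
  · rw [hJ]
    exact hV.mul_mul_apply_nonneg (hsign i j hij)

/-- With `Γ` the stoichiometric matrix of SYS 1, `T` the re-signed
version of `Γ`, and `T'` the given left inverse: `T' * T = 1`, and for every `V`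
with the N1C sign pattern relative to `Γ`, the matrix `J = T' Γ V T` has
nonpositive diagonal and nonnegative off-diagonal entries. -/
theorem stmt10 :
    let Γ : Matrix (Fin 5) (Fin 3) ℝ :=
      !![-1, 0, 2; -1, -1, 0; 0, -1, -1; 1, 0, 0; 0, 1, 0]
    let T : Matrix (Fin 5) (Fin 3) ℝ :=
      !![-1, 0, 2; -1, 1, 0; 0, 1, -1; 1, 0, 0; 0, -1, 0]
    let T' : Matrix (Fin 3) (Fin 5) ℝ :=
      !![1, -2, 2, 0, 0; 1, -1, 2, 0, 0; 1, -1, 1, 0, 0]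
    T' * T = 1 ∧
    ∀ V : Matrix (Fin 3) (Fin 5) ℝ, N1CPattern Γ V →
      (∀ i : Fin 3, (T' * Γ * V * T) i i ≤ 0) ∧
      (∀ i j : Fin 3, i ≠ j → 0 ≤ (T' * Γ * V * T) i j) := by
  intro Γ T T'
  let d : Fin 3 → ℝ := ![1, -1, 1]
  have hT : T = Γ * diagonal d := by
    ext i j; fin_cases i <;> fin_cases j <;> simp [T, Γ, d]
  have hT' : T' * Γ = diagonal d := by
    ext i j; fin_cases i <;> fin_cases j <;> simp [T', Γ, d, mul_apply, Fin.sum_univ_five] <;> norm_num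
  have hsign : ∀ i j, i ≠ j → ∀ k, d i * d j * (Γ k i * Γ k j) ≤ 0 := by
    intro i j hij k
    fin_cases i <;> fin_cases j <;> fin_cases k <;> simp_all [Γ, d]
  refine ⟨?_, fun V hV => ?_⟩
  · ext i j; fin_cases i <;> fin_cases j <;> simp [T', T, mul_apply, Fin.sum_univ_five] <;> norm_num
  · rw [hT]
    exact cooperative_of_signed_columns Γ T' d hT' hsign V hV
end

section
/- Let Γ ∈ ℝ^{4×3} have rows (−1,0,1), (1,−1,0), (1,0,−1), (0,1,−1), and let T ∈ ℝ^{4×3} have rows (1,0,0), (0,1,0), (−1,0,0), (0,0,1). Then for every left inverse T' ∈ ℝ^{3×4} of T (T'T = I₃) and every V ∈ ℝ^{3×4} satisfying the N1C sign pattern relative to Γ, the matrix J = T'ΓVT ∈ ℝ^{3×3} has nonnegative off-diagonal entries; moreover J is independent of the choice of left inverse T'. -/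
namespace N1CPattern

variable {n m p : ℕ}

theorem mul_apply_nonneg_of_ne {Γ : Matrix (Fin n) (Fin m) ℝ} {V : Matrix (Fin m) (Fin n) ℝ}
    (hV : N1CPattern Γ V) (hΓ : ∀ k i j, i ≠ j → Γ i k * Γ j k ≤ 0)
    {i j : Fin n} (hij : i ≠ j) : 0 ≤ (Γ * V) i j := by
  rw [Matrix.mul_apply]
  refine Finset.sum_nonneg fun k _ => ?_
  obtain ⟨hsign, hzero⟩ := hV j k
  rcases eq_or_ne (Γ j k) 0 with h | h
  · simp [hzero h]
  · refine nonneg_of_mul_nonneg_right ?_ (by positivity : 0 < Γ j k ^ 2)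
    nlinarith [mul_nonneg_of_nonpos_of_nonpos (hΓ k i j hij) hsign]

theorem mul_of_eq_mul {Γ : Matrix (Fin n) (Fin m) ℝ} {V : Matrix (Fin m) (Fin n) ℝ}
    (hV : N1CPattern Γ V) {T : Matrix (Fin n) (Fin p) ℝ} {M : Matrix (Fin p) (Fin m) ℝ}
    (hΓ : Γ = T * M) (hT : ∀ i j j', j ≠ j' → T i j * T i j' = 0) :
    N1CPattern M (V * T) := by
  have hrow : ∀ i j k, T i j ≠ 0 → Γ i k = T i j * M j k := by
    intro i j k hij
    rw [hΓ, Matrix.mul_apply, Finset.sum_eq_single j (fun j' _ hj' => ?_) (by simp)]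
    rcases mul_eq_zero.1 (hT i j' j hj') with h | h
    · simp [h]
    · exact absurd h hij
  intro j k
  constructor
  · rw [Matrix.mul_apply, Finset.mul_sum]
    refine Finset.sum_nonpos fun i _ => ?_
    rcases eq_or_ne (T i j) 0 with h | h
    · simp [h]
    · have := (hV i k).1
      rw [hrow i j k h] at this
      linarith
  · intro hM
    rw [Matrix.mul_apply]
    refine Finset.sum_eq_zero fun i _ => ?_
    rcases eq_or_ne (T i j) 0 with h | h
    · simp [h]
    · simp [(hV i k).2 (by rw [hrow i j k h, hM, mul_zero])]

end N1CPattern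

/-- With `Γ` the stoichiometric matrix of
`A ⇌ B + C, B ⇌ D, C + D ⇌ A` and `T` as given, for every left inverse `T'` of `T`
and every `V` with the N1C sign pattern relative to `Γ`, the matrix
`J = T' Γ V T` has nonnegative off-diagonal entries, and `J` does not depend on
the choice of left inverse. -/
theorem stmt12 :
    let Γ : Matrix (Fin 4) (Fin 3) ℝ :=
      !![-1, 0, 1; 1, -1, 0; 1, 0, -1; 0, 1, -1]
    let T : Matrix (Fin 4) (Fin 3) ℝ :=
      !![1, 0, 0; 0, 1, 0; -1, 0, 0; 0, 0, 1]
    ∀ T' : Matrix (Fin 3) (Fin 4) ℝ, T' * T = 1 →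
    ∀ V : Matrix (Fin 3) (Fin 4) ℝ, N1CPattern Γ V →
      (∀ i j : Fin 3, i ≠ j → 0 ≤ (T' * Γ * V * T) i j) ∧
      (∀ T'' : Matrix (Fin 3) (Fin 4) ℝ, T'' * T = 1 →
        T' * Γ * V * T = T'' * Γ * V * T) := by
  intro Γ T T' hT' V hV
  let M : Matrix (Fin 3) (Fin 3) ℝ := !![-1, 0, 1; 1, -1, 0; 0, 1, -1]
  have hΓ : Γ = T * M := by
    ext i j
    fin_cases i <;> fin_cases j <;> simp [Γ, T, M, Matrix.mul_apply, Fin.sum_univ_three]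
  have hT : ∀ i j j', j ≠ j' → T i j * T i j' = 0 := by
    intro i j j' h
    fin_cases i <;> fin_cases j <;> fin_cases j' <;> simp_all [T]
  have hM : ∀ k i j, i ≠ j → M i k * M j k ≤ 0 := by
    intro k i j h
    fin_cases k <;> fin_cases i <;> fin_cases j <;> simp_all [M]
  have hJ : ∀ S : Matrix (Fin 3) (Fin 4) ℝ, S * T = 1 → S * Γ * V * T = M * (V * T) := by
    intro S hS
    rw [hΓ, ← Matrix.mul_assoc, hS, Matrix.one_mul, Matrix.mul_assoc]
  refine ⟨fun i j hij => ?_, fun T'' hT'' => by rw [hJ T' hT', hJ T'' hT'']⟩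
  rw [hJ T' hT']
  exact (hV.mul_of_eq_mul hΓ hT).mul_apply_nonneg_of_ne hM hij
end

section
/- Let Γ ∈ ℝ^{5×4} have rows (−1,0,1,1), (1,−1,0,0), (1,0,−1,−1), (0,1,−1,0), (0,0,0,−1), and let T ∈ ℝ^{5×4} have rows (1,0,0,0), (0,1,0,0), (−1,0,0,0), (0,0,1,0), (0,0,0,1). Then: (i) Γ has rank 3 while T has rank 4; (ii) Im(Γ) ⊆ Im(T); and (iii) for every left inverse T' ∈ ℝ^{4×5} of T and every V ∈ ℝ^{4×5} satisfying the N1C sign pattern relative to Γ, the matrix J = T'ΓVT ∈ ℝ^{4×4} has nonnegative off-diagonal entries. -/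
set_option maxHeartbeats 1000000 in
/-- With `Γ` the stoichiometric matrix of
`A ⇌ B + C, B ⇌ D, C + D ⇌ A, C + E ⇌ A` and `T` as given: (i) `Γ` has rank 3 and
`T` has rank 4; (ii) `Im Γ ⊆ Im T`; (iii) for every left inverse `T'` of `T` and
every `V` with the N1C sign pattern relative to `Γ`, the matrix `J = T' Γ V T`
has nonnegative off-diagonal entries. -/
theorem stmt13 :
    let Γ : Matrix (Fin 5) (Fin 4) ℝ :=
      !![-1, 0, 1, 1; 1, -1, 0, 0; 1, 0, -1, -1; 0, 1, -1, 0; 0, 0, 0, -1]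
    let T : Matrix (Fin 5) (Fin 4) ℝ :=
      !![1, 0, 0, 0; 0, 1, 0, 0; -1, 0, 0, 0; 0, 0, 1, 0; 0, 0, 0, 1]
    Γ.rank = 3 ∧ T.rank = 4 ∧
    {w | ∃ u : Fin 4 → ℝ, w = Γ.mulVec u} ⊆ {w | ∃ u : Fin 4 → ℝ, w = T.mulVec u} ∧
    ∀ T' : Matrix (Fin 4) (Fin 5) ℝ, T' * T = 1 →
    ∀ V : Matrix (Fin 4) (Fin 5) ℝ, N1CPattern Γ V →
      ∀ i j : Fin 4, i ≠ j → 0 ≤ (T' * Γ * V * T) i j := by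
  intro Γ T
  -- factorization Γ = B * C
  set B : Matrix (Fin 5) (Fin 3) ℝ :=
    !![-1, 0, 1; 1, -1, 0; 1, 0, -1; 0, 1, 0; 0, 0, -1] with hB
  set C : Matrix (Fin 3) (Fin 4) ℝ := !![1, 0, -1, 0; 0, 1, -1, 0; 0, 0, 0, 1] with hC
  set B' : Matrix (Fin 3) (Fin 5) ℝ :=
    !![0, 1, 0, 1, 0; 0, 0, 0, 1, 0; 0, 0, 0, 0, -1] with hB'
  set C' : Matrix (Fin 4) (Fin 3) ℝ := !![1, 0, 0; 0, 1, 0; 0, 0, 0; 0, 0, 1] with hC'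
  set M : Matrix (Fin 4) (Fin 4) ℝ :=
    !![-1, 0, 1, 1; 1, -1, 0, 0; 0, 1, -1, 0; 0, 0, 0, -1] with hM
  set Ts : Matrix (Fin 4) (Fin 5) ℝ :=
    !![1, 0, 0, 0, 0; 0, 1, 0, 0, 0; 0, 0, 0, 1, 0; 0, 0, 0, 0, 1] with hTs
  have hGBC : Γ = B * C := by
    ext i j; fin_cases i <;> fin_cases j <;>
      simp [Γ, B, C, Matrix.mul_apply, Fin.sum_univ_succ, Matrix.vecHead, Matrix.vecTail] <;> ring
  have hBB : B' * B = 1 := by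
    ext i j; fin_cases i <;> fin_cases j <;>
      simp [B, B', Matrix.mul_apply, Fin.sum_univ_succ, Matrix.one_apply, Matrix.vecHead, Matrix.vecTail] <;> ring
  have hCC : C * C' = 1 := by
    ext i j; fin_cases i <;> fin_cases j <;>
      simp [C, C', Matrix.mul_apply, Fin.sum_univ_succ, Matrix.one_apply, Matrix.vecHead, Matrix.vecTail] <;> ring
  have hTT : Ts * T = 1 := by
    ext i j; fin_cases i <;> fin_cases j <;>
      simp [T, Ts, Matrix.mul_apply, Fin.sum_univ_succ, Matrix.one_apply, Matrix.vecHead, Matrix.vecTail] <;> ring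
  have hGTM : Γ = T * M := by
    ext i j; fin_cases i <;> fin_cases j <;>
      simp [Γ, T, M, Matrix.mul_apply, Fin.sum_univ_succ, Matrix.vecHead, Matrix.vecTail] <;> ring
  refine ⟨?_, ?_, ?_, ?_⟩
  · -- rank Γ = 3
    refine le_antisymm ?_ ?_
    · calc Γ.rank = (B * C).rank := by rw [hGBC]
        _ ≤ B.rank := Matrix.rank_mul_le_left B C
        _ ≤ 3 := by simpa using B.rank_le_card_width
    · have h1 : B' * Γ * C' = 1 := by
        rw [hGBC, ← Matrix.mul_assoc B' B C, hBB, Matrix.one_mul, hCC]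
      calc (3 : ℕ) = (1 : Matrix (Fin 3) (Fin 3) ℝ).rank := by simp
        _ = (B' * Γ * C').rank := by rw [h1]
        _ ≤ (B' * Γ).rank := Matrix.rank_mul_le_left _ _
        _ ≤ Γ.rank := Matrix.rank_mul_le_right _ _
  · -- rank T = 4
    refine le_antisymm (by simpa using T.rank_le_card_width) ?_
    calc (4 : ℕ) = (1 : Matrix (Fin 4) (Fin 4) ℝ).rank := by simp
      _ = (Ts * T).rank := by rw [hTT]
      _ ≤ T.rank := Matrix.rank_mul_le_right _ _
  · rintro w ⟨u, rfl⟩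
    exact ⟨M.mulVec u, by rw [hGTM, ← Matrix.mulVec_mulVec]⟩
  · intro T' hT' V hV i j hij
    have key : T' * Γ * V * T = M * V * T := by
      rw [hGTM, ← Matrix.mul_assoc T' T M, hT', Matrix.one_mul]
    rw [key]
    have h00 : 0 ≤ V 0 0 := by have := (hV 0 0).1; simp [Γ] at this; linarith
    have h01 : V 0 1 ≤ 0 := by have := (hV 1 0).1; simp [Γ] at this; linarith
    have h02 : V 0 2 ≤ 0 := by have := (hV 2 0).1; simp [Γ] at this; linarith
    have h03 : V 0 3 = 0 := (hV 3 0).2 (by simp [Γ, Matrix.vecHead, Matrix.vecTail])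
    have h04 : V 0 4 = 0 := (hV 4 0).2 (by simp [Γ, Matrix.vecHead, Matrix.vecTail])
    have h10 : V 1 0 = 0 := (hV 0 1).2 (by simp [Γ, Matrix.vecHead, Matrix.vecTail])
    have h11 : 0 ≤ V 1 1 := by have := (hV 1 1).1; simp [Γ] at this; linarith
    have h12 : V 1 2 = 0 := (hV 2 1).2 (by simp [Γ, Matrix.vecHead, Matrix.vecTail])
    have h13 : V 1 3 ≤ 0 := by have := (hV 3 1).1; simp [Γ] at this; linarith
    have h14 : V 1 4 = 0 := (hV 4 1).2 (by simp [Γ, Matrix.vecHead, Matrix.vecTail])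
    have h20 : V 2 0 ≤ 0 := by have := (hV 0 2).1; simp [Γ] at this; linarith
    have h21 : V 2 1 = 0 := (hV 1 2).2 (by simp [Γ, Matrix.vecHead, Matrix.vecTail])
    have h22 : 0 ≤ V 2 2 := by have := (hV 2 2).1; simp [Γ] at this; linarith
    have h23 : 0 ≤ V 2 3 := by have := (hV 3 2).1; simp [Γ] at this; linarith
    have h24 : V 2 4 = 0 := (hV 4 2).2 (by simp [Γ, Matrix.vecHead, Matrix.vecTail])
    have h30 : V 3 0 ≤ 0 := by have := (hV 0 3).1; simp [Γ] at this; linarith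
    have h31 : V 3 1 = 0 := (hV 1 3).2 (by simp [Γ, Matrix.vecHead, Matrix.vecTail])
    have h32 : 0 ≤ V 3 2 := by have := (hV 2 3).1; simp [Γ] at this; linarith
    have h33 : V 3 3 = 0 := (hV 3 3).2 (by simp [Γ, Matrix.vecHead, Matrix.vecTail])
    have h34 : 0 ≤ V 3 4 := by have := (hV 4 3).1; simp [Γ] at this; linarith
    fin_cases i <;> fin_cases j <;>
      first
      | exact absurd rfl hij
      | (simp [M, T, Matrix.mul_apply, Matrix.vecMul, dotProduct, Fin.sum_univ_succ, Matrix.vecHead, Matrix.vecTail, show ((2:Fin 4).succ : Fin 5) = 3 from rfl, show ((2:Fin 3).succ : Fin 4) = 3 from rfl, show ((3:Fin 4).succ : Fin 5) = 4 from rfl]; linarith)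
end

section
/- Let n ≥ 1 be odd and Γ_n the stoichiometric matrix of SYS n. Then Γ_n is R-sortable: there exists d ∈ {−1,+1}^{n+2} such that for every row index k and all distinct column indices i, j, one has d_i d_j (Γ_n)_{ki} (Γ_n)_{kj} ≤ 0. -/
/-- The stoichiometric matrix `Γ_n` of SYS n: substrates (rows) are
`A_1, …, A_{n+2}, B_1, …, B_{n+1}` (so row `i` is `A_{i+1}` for `i < n+2` and
`B_{i-(n+1)}` otherwise), and reactions (columns) are
`A_{j+1} + A_{j+2} ⇌ B_{j+1}` for `j < n+1`, and `A_{n+2} ⇌ 2 A_1` for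
`j = n+1`. -/
def Gamma (n : ℕ) : Matrix (Fin (2*n+3)) (Fin (n+2)) ℝ :=
  fun i j =>
    if (j : ℕ) < n + 1 then
      if (i : ℕ) = (j : ℕ) ∨ (i : ℕ) = (j : ℕ) + 1 then -1
      else if (i : ℕ) = n + 2 + (j : ℕ) then 1 else 0
    else
      if (i : ℕ) = 0 then 2 else if (i : ℕ) = n + 1 then -1 else 0

lemma sgnL1 (a b : ℕ) (h : a = b + 1 ∨ b = a + 1) : (-1:ℝ)^a * (-1)^b ≤ 0 := by
  rw [← pow_add, Odd.neg_one_pow ⟨min a b, by omega⟩]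
  norm_num

lemma sgnL2 (a b : ℕ) (h : Even (a + b)) : 0 ≤ (-1:ℝ)^a * (-1)^b := by
  rw [← pow_add, h.neg_one_pow]
  norm_num

/-- For odd `n ≥ 1`, the stoichiometric matrix `Γ_n` of SYS n is
R-sortable: there is a signing `d : {±1}^{n+2}` of the columns such that
`d i * d j * (Γ_n) k i * (Γ_n) k j ≤ 0` for every row `k` and all distinct
columns `i ≠ j`. -/
theorem stmt17 (n : ℕ) (hn : 1 ≤ n) (hodd : Odd n) :
    ∃ d : Fin (n+2) → ℝ, (∀ k, d k = 1 ∨ d k = -1) ∧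
      ∀ (k : Fin (2*n+3)) (i j : Fin (n+2)), i ≠ j →
        d i * d j * Gamma n k i * Gamma n k j ≤ 0 := by
  obtain ⟨m, hm⟩ := hodd
  refine ⟨fun j => (-1 : ℝ) ^ (j : ℕ), fun k => ?_, ?_⟩
  · rcases Nat.even_or_odd (k : ℕ) with h | h
    · exact Or.inl h.neg_one_pow
    · exact Or.inr h.neg_one_pow
  · intro k i j hij
    have hij' : (i : ℕ) ≠ (j : ℕ) := fun h => hij (Fin.ext h)
    have hi2 := i.isLt
    have hj2 := j.isLt
    have hk2 := k.isLt
    simp only [Gamma]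
    split_ifs <;> try norm_num
    all_goals first
      | omega
      | exact sgnL1 _ _ (by omega)
      | exact sgnL2 _ _ ⟨m + 1, by omega⟩
end
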